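/- Every quaternary matroid (matroid representable over GF(4)), viewed as the set system of its bases, is vertex-flip-safe: for any sequence of pivots and loop complementations applied to it, the result is a delta-matroid. -/

import Mathlib

open Matrix
open scoped symmDiff

variable {V : Type} [Fintype V] [DecidableEq V]

/-- principal submatrix of A indexed by X -/
def pSub {F : Type} [Field F] (A : Matrix V V F) (X : Finset V) : Matrix X X F :=
  Matrix.of fun i j => A i.1 j.1

open scoped Classical in
/-- the set system of index sets of nonsingular principal submatrices of A -/
noncomputable def MA {F : Type} [Field F] (A : Matrix V V F) : Finset (Finset V) :=
  Finset.univ.filter (fun X => (pSub A X).det ≠ 0)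

/-- pivot (twist) of a set system on X -/
def pivotOp (E : Finset (Finset V)) (X : Finset V) : Finset (Finset V) :=
  E.image (fun Y => Y ∆ X)

/-- loop complementation of a set system on u -/
def loopC (E : Finset (Finset V)) (u : V) : Finset (Finset V) :=
  E ∆ ((E.filter (fun Y => u ∉ Y)).image (fun Y => insert u Y))

/-- apply a sequence of vertex flips: `Sum.inl u` is pivot *u,
`Sum.inr u` is loop complementation +u -/
def applyFlips (E : Finset (Finset V)) (φ : List (V ⊕ V)) : Finset (Finset V) :=
  φ.foldl (fun E op => match op with
    | Sum.inl u => pivotOp E {u}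
    | Sum.inr u => loopC E u) E

/-- a delta-matroid: a nonempty set system satisfying symmetric exchange -/
def IsDeltaMatroid (E : Finset (Finset V)) : Prop :=
  E.Nonempty ∧ ∀ X ∈ E, ∀ Y ∈ E, ∀ u ∈ X ∆ Y,
    X ∆ ({u} : Finset V) ∈ E ∨ ∃ v ∈ X ∆ Y, v ≠ u ∧ X ∆ ({u, v} : Finset V) ∈ E

/-- A is inv-symmetric over GF(4): inv(−Aᵀ) = A entrywise, inv = (·²) -/
def InvSymm (A : Matrix V V (GaloisField 2 2)) : Prop :=
  ∀ i j, (-(Aᵀ i j)) ^ 2 = A i j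
/-- the columns of A indexed by Y are linearly independent -/
def ColIndep {W F : Type} [Field F] [Fintype W] (A : Matrix W V F) (Y : Finset V) : Prop :=
  LinearIndependent F (fun y : Y => (Aᵀ y.1 : W → F))

open scoped Classical in
/-- the bases (maximal column-independent sets) of the column matroid of A -/
noncomputable def colBases {W F : Type} [Field F] [Fintype W] (A : Matrix W V F) :
    Finset (Finset V) :=
  Finset.univ.filter (fun Y => ColIndep A Y ∧ ∀ Z, Y ⊆ Z → ColIndep A Z → Y = Z)

/-!
A *frame representation* of a set system on `V` is an inv-symmetric matrix `A` over `𝔽₄`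
together with, at every vertex `u`, an ordered basis `(α, β)` of `𝔽₂² ⊆ 𝔽₄²`: a set `Z` is a
member iff the matrix whose row `u` is `γ.1 • eᵤ + γ.2 • Aᵤ`, with `γ = β` for `u ∈ Z` and
`γ = α` otherwise, is nonsingular. Pivoting on `X` swaps `α` and `β` on `X`, and loop
complementation at `u` replaces `β` by `α + β`; by row linearity the determinant of `Z ∋ u` becomes
the sum of those of `Z` and `Z \ {u}`, and since `A^σ = Aᵀ` for the Frobenius `σ` all these
determinants are `σ`-fixed, i.e. lie in `𝔽₂`, which is exactly the symmetric-difference rule. So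
frame-represented systems are closed under vertex flips.

Such a system is a delta-matroid. After pivoting so that `∅` is a member, the determinant of `Z`
is, up to a common factor, the principal minor `det B[Z]` of one matrix `B` with `B^σ = Bᵀ`. For
`u ∈ Y` with `det B[Y] ≠ 0`, either `B u u ≠ 0`, or some `B u v ≠ 0` with `v ∈ Y`, and then
`det B[{u, v}] = -B u v * (B u v)^σ ≠ 0`.

Finally the bases of the column matroid of `A` over `𝔽₄` are frame-represented: with a basis `T`
and the matrix `D` of coordinates of the columns in `T`, take `[[0, D], [D^σᵀ, 0]]` and frames
making the matrix of `Z` the identity outside `Z ∆ T`. Its kernel is trivial iff the block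
`D[T \ Z, Z \ T]` is invertible, which is the classical criterion for `Z` to be a basis.
-/

local notation "𝔽₄" => GaloisField 2 2

local notation "σ" => frobenius 𝔽₄ 2

lemma frob_frob (x : 𝔽₄) : σ (σ x) = x := by
  let := Fintype.ofFinite 𝔽₄
  have hcard : Fintype.card 𝔽₄ = 2 ^ 2 := by
    rw [← Nat.card_eq_fintype_card, GaloisField.card 2 2 two_ne_zero]
  rw [frobenius_def, frobenius_def, ← pow_mul, ← sq, ← hcard, FiniteField.pow_card]

lemma eq_zero_or_eq_one_of_frob_eq {x : 𝔽₄} (h : σ x = x) : x = 0 ∨ x = 1 := by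
  rw [frobenius_def] at h
  have : x * (x - 1) = 0 := by linear_combination h
  exact (mul_eq_zero.mp this).imp id sub_eq_zero.mp

lemma frob_eq_zero_iff {x : 𝔽₄} : σ x = 0 ↔ x = 0 := by
  rw [frobenius_def, pow_eq_zero_iff two_ne_zero]

lemma InvSymm.frob_apply {ι : Type} {A : Matrix ι ι 𝔽₄} (hA : InvSymm A) (i j : ι) :
    σ (A i j) = A j i := by
  rw [frobenius_def, ← hA j i, transpose_apply, CharTwo.neg_eq]

lemma InvSymm.map_frob {ι : Type} {A : Matrix ι ι 𝔽₄} (hA : InvSymm A) : A.map σ = Aᵀ :=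
  Matrix.ext hA.frob_apply

/-! ### Determinant identities -/

open Polynomial in
/-- Over `K[X]` the diagonal matrix `X + q` is invertible and commutes with `p`; evaluate at
`X = 0`. -/
lemma det_diagonal_add_diagonal_mul_comm {n K : Type*} [Fintype n] [DecidableEq n] [Field K]
    (p q : n → K) (A : Matrix n n K) :
    (diagonal p + diagonal q * A).det = (diagonal p + A * diagonal q).det := by
  let D : Matrix n n K[X] := diagonal fun i => X + C (q i)
  let P : Matrix n n K[X] := diagonal fun i => C (p i)
  let A' : Matrix n n K[X] := A.map C
  have hcomm : D * (P + A' * D) = (P + D * A') * D := by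
    simp only [D, P, mul_add, add_mul, diagonal_mul_diagonal, mul_assoc, mul_comm]
  have hD : D.det ≠ 0 := by
    simp only [D, det_diagonal]
    exact Finset.prod_ne_zero_iff.mpr fun i _ => X_add_C_ne_zero (q i)
  have hdet : (P + A' * D).det = (P + D * A').det := by
    have h := congrArg det hcomm
    rw [det_mul, det_mul, mul_comm (P + D * A').det] at h
    exact mul_left_cancel₀ hD h
  have heval := congrArg (evalRingHom (0 : K)) hdet
  rw [RingHom.map_det, RingHom.map_det, map_add, map_add, map_mul, map_mul] at heval
  simp only [RingHom.mapMatrix_apply, D, P, A', diagonal_map (map_zero _), Matrix.map_map] at heval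
  simpa [Function.comp_def] using heval.symm

lemma diagonal_add_mul_diagonal_mul_comm {n R : Type*} [Fintype n] [DecidableEq n] [CommRing R]
    (p₀ q₀ p₁ q₁ : n → R) (h : ∀ i, p₀ i * q₁ i - q₀ i * p₁ i = 1) (M : Matrix n n R) :
    (diagonal p₀ + M * diagonal q₀) * (diagonal p₁ + diagonal q₁ * M)
      = (diagonal p₁ + M * diagonal q₁) * (diagonal p₀ + diagonal q₀ * M) := by
  have hcomm : ∀ d e : n → R, diagonal d * diagonal e = diagonal e * diagonal d := fun d e => by
    simp only [diagonal_mul_diagonal, mul_comm]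
  have e₁ : diagonal p₀ * diagonal q₁ = 1 + diagonal p₁ * diagonal q₀ := by
    rw [diagonal_mul_diagonal, diagonal_mul_diagonal, ← diagonal_one, diagonal_add]
    congr 1
    funext i
    linear_combination h i
  have e₂ : diagonal q₁ * diagonal p₀ = 1 + diagonal p₁ * diagonal q₀ := by
    rw [hcomm, e₁]
  calc (diagonal p₀ + M * diagonal q₀) * (diagonal p₁ + diagonal q₁ * M)
      = diagonal p₀ * diagonal p₁ + diagonal p₀ * diagonal q₁ * M
          + M * (diagonal q₀ * diagonal p₁) + M * (diagonal q₀ * diagonal q₁) * M := by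
        noncomm_ring
    _ = diagonal p₁ * diagonal p₀ + diagonal p₁ * diagonal q₀ * M
          + M * (diagonal q₁ * diagonal p₀) + M * (diagonal q₁ * diagonal q₀) * M := by
        rw [hcomm p₀ p₁, e₁, hcomm q₀ p₁, hcomm q₀ q₁, e₂]
        noncomm_ring
    _ = (diagonal p₁ + M * diagonal q₁) * (diagonal p₀ + diagonal q₀ * M) := by
        noncomm_ring

lemma det_eq_det_pSub_of_rows_single {n K : Type} [Fintype n] [DecidableEq n] [Field K]
    (M : Matrix n n K) (D : Finset n) (h : ∀ i ∉ D, M i = Pi.single i 1) :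
    M.det = (pSub M D).det := by
  rw [twoBlockTriangular_det M (· ∈ D)]
  · have hone : toSquareBlockProp M (fun i => i ∉ D) = 1 := by
      ext i j
      simp [toSquareBlockProp, toBlock, h i i.2, Pi.single_apply, one_apply, Subtype.ext_iff,
        eq_comm]
    rw [hone, det_one, mul_one]
    convert rfl
    rfl
  · intro i hi j hj
    rw [h i hi, Pi.single_apply, if_neg (by rintro rfl; exact hi hj)]

lemma det_pSub_singleton {n K : Type} [DecidableEq n] [Field K] (B : Matrix n n K) (u : n) :
    (pSub B {u}).det = B u u := by
  let _ : Unique ({u} : Finset n) := ⟨⟨⟨u, Finset.mem_singleton_self u⟩⟩,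
    fun i => Subtype.ext (Finset.mem_singleton.mp i.2)⟩
  rw [det_unique]
  rfl

lemma det_pSub_pair {n K : Type} [DecidableEq n] [Field K] (B : Matrix n n K) {u v : n}
    (huv : u ≠ v) : (pSub B {u, v}).det = B u u * B v v - B u v * B v u := by
  let e : Fin 2 ≃ ({u, v} : Finset n) :=
    { toFun := ![⟨u, by simp⟩, ⟨v, by simp⟩]
      invFun := fun x => if x.1 = u then 0 else 1
      left_inv := by
        intro i
        fin_cases i <;> simp [huv.symm]
      right_inv := by
        rintro ⟨x, hx⟩
        rcases Finset.mem_insert.mp hx with rfl | hx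
        · simp
        · obtain rfl := Finset.mem_singleton.mp hx
          simp [huv.symm] }
  rw [← det_submatrix_equiv_self e, det_fin_two]
  rfl

/-! ### Pivots and loop complementations -/

lemma mem_pivotOp {α : Type} [DecidableEq α] {E : Finset (Finset α)} {X Z : Finset α} :
    Z ∈ pivotOp E X ↔ Z ∆ X ∈ E := by
  simp only [pivotOp, Finset.mem_image]
  exact ⟨by rintro ⟨Y, hY, rfl⟩; rwa [symmDiff_symmDiff_cancel_right],
    fun h => ⟨Z ∆ X, h, symmDiff_symmDiff_cancel_right X Z⟩⟩

lemma mem_loopC {α : Type} [DecidableEq α] {E : Finset (Finset α)} {u : α} {Z : Finset α} :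
    Z ∈ loopC E u ↔ Xor (Z ∈ E) (u ∈ Z ∧ Z.erase u ∈ E) := by
  have hins : Z ∈ (E.filter (u ∉ ·)).image (insert u) ↔ u ∈ Z ∧ Z.erase u ∈ E := by
    simp only [Finset.mem_image, Finset.mem_filter]
    constructor
    · rintro ⟨Y, ⟨hY, hu⟩, rfl⟩
      exact ⟨Finset.mem_insert_self u Y, by rwa [Finset.erase_insert hu]⟩
    · rintro ⟨hu, hE⟩
      exact ⟨Z.erase u, ⟨hE, Finset.notMem_erase u Z⟩, Finset.insert_erase hu⟩
  rw [loopC, Finset.mem_symmDiff, hins]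
  rfl

lemma loopC_nonempty {α : Type} [DecidableEq α] {E : Finset (Finset α)} (hE : E.Nonempty)
    (u : α) : (loopC E u).Nonempty := by
  obtain ⟨Y, hY⟩ := hE
  by_cases h : u ∈ Y ∧ Y.erase u ∈ E
  · refine ⟨Y.erase u, mem_loopC.mpr (Or.inl ⟨h.2, fun h' => ?_⟩)⟩
    exact Finset.notMem_erase u Y h'.1
  · exact ⟨Y, mem_loopC.mpr (Or.inl ⟨hY, h⟩)⟩

lemma applyFlips_induction {α : Type} [DecidableEq α] (P : Finset (Finset α) → Prop)
    (hpivot : ∀ E u, P E → P (pivotOp E {u})) (hloop : ∀ E u, P E → P (loopC E u)) :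
    ∀ (φ : List (α ⊕ α)) (E : Finset (Finset α)), P E → P (applyFlips E φ)
  | [], _, hE => hE
  | Sum.inl u :: φ, E, hE => applyFlips_induction P hpivot hloop φ _ (hpivot E u hE)
  | Sum.inr u :: φ, E, hE => applyFlips_induction P hpivot hloop φ _ (hloop E u hE)

/-! ### Frame representations -/

/-- A frame `p = (α, β)` at a vertex `u` consists of two vectors of `𝔽₂² ⊆ 𝔽₄²` forming a
basis of `𝔽₂²`; the vertex contributes the row `α.1 • eᵤ + α.2 • Aᵤ` to the matrix of a set `Z`
with `u ∉ Z`, and `β.1 • eᵤ + β.2 • Aᵤ` when `u ∈ Z`. -/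
def IsFrame (p : (𝔽₄ × 𝔽₄) × (𝔽₄ × 𝔽₄)) : Prop :=
  σ p.1.1 = p.1.1 ∧ σ p.1.2 = p.1.2 ∧ σ p.2.1 = p.2.1 ∧ σ p.2.2 = p.2.2 ∧
    p.1.1 * p.2.2 + p.1.2 * p.2.1 = 1

lemma IsFrame.swap {p : (𝔽₄ × 𝔽₄) × (𝔽₄ × 𝔽₄)} (h : IsFrame p) : IsFrame p.swap := by
  obtain ⟨h₁, h₂, h₃, h₄, h₅⟩ := h
  simp only [IsFrame, Prod.fst_swap, Prod.snd_swap]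
  exact ⟨h₃, h₄, h₁, h₂, by linear_combination h₅⟩

lemma IsFrame.loop {p : (𝔽₄ × 𝔽₄) × (𝔽₄ × 𝔽₄)} (h : IsFrame p) : IsFrame (p.1, p.1 + p.2) := by
  obtain ⟨h₁, h₂, h₃, h₄, h₅⟩ := h
  refine ⟨h₁, h₂, by simp only [Prod.fst_add, map_add, h₁, h₃], by
    simp only [Prod.snd_add, map_add, h₂, h₄], ?_⟩
  have h2 : (2 : 𝔽₄) = 0 := CharTwo.two_eq_zero
  simp only [Prod.fst_add, Prod.snd_add]
  linear_combination h₅ + p.1.1 * p.1.2 * h2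

def frameChoice {α : Type} [DecidableEq α] (c : α → (𝔽₄ × 𝔽₄) × (𝔽₄ × 𝔽₄)) (Z : Finset α)
    (u : α) : 𝔽₄ × 𝔽₄ :=
  if u ∈ Z then (c u).2 else (c u).1

noncomputable def frameMatrix {α : Type} [DecidableEq α] (A : Matrix α α 𝔽₄)
    (c : α → (𝔽₄ × 𝔽₄) × (𝔽₄ × 𝔽₄)) (Z : Finset α) : Matrix α α 𝔽₄ :=
  of fun u => (frameChoice c Z u).1 • Pi.single u 1 + (frameChoice c Z u).2 • A u

lemma frameMatrix_row {α : Type} [DecidableEq α] (A : Matrix α α 𝔽₄)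
    (c : α → (𝔽₄ × 𝔽₄) × (𝔽₄ × 𝔽₄)) (Z : Finset α) (u : α) :
    frameMatrix A c Z u = (frameChoice c Z u).1 • Pi.single u 1 + (frameChoice c Z u).2 • A u :=
  rfl

lemma frameMatrix_row_eq {α : Type} [DecidableEq α] (A : Matrix α α 𝔽₄)
    {c c' : α → (𝔽₄ × 𝔽₄) × (𝔽₄ × 𝔽₄)} {Z Z' : Finset α} {u : α}
    (h : frameChoice c Z u = frameChoice c' Z' u) :
    frameMatrix A c Z u = frameMatrix A c' Z' u := by
  rw [frameMatrix_row, frameMatrix_row, h]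

lemma frameMatrix_eq_diagonal_add (A : Matrix V V 𝔽₄) (c : V → (𝔽₄ × 𝔽₄) × (𝔽₄ × 𝔽₄)) (Z : Finset V) :
    frameMatrix A c Z = diagonal (fun u => (frameChoice c Z u).1)
      + diagonal (fun u => (frameChoice c Z u).2) * A := by
  ext i j
  simp [frameMatrix, diagonal_apply, Pi.single_apply, eq_comm]

lemma frameMatrix_map_frob {α : Type} [DecidableEq α] {A : Matrix α α 𝔽₄}
    {c : α → (𝔽₄ × 𝔽₄) × (𝔽₄ × 𝔽₄)} (hA : InvSymm A) (hc : ∀ u, IsFrame (c u))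
    (Z : Finset α) : (frameMatrix A c Z).map σ = frameMatrix Aᵀ c Z := by
  ext u v
  obtain ⟨h₁, h₂, h₃, h₄, -⟩ := hc u
  rcases eq_or_ne u v with rfl | huv <;> by_cases hu : u ∈ Z <;>
    simp [frameMatrix, frameChoice, hA.frob_apply, *]

lemma frob_det_frameMatrix {A : Matrix V V 𝔽₄} {c : V → (𝔽₄ × 𝔽₄) × (𝔽₄ × 𝔽₄)}
    (hA : InvSymm A) (hc : ∀ u, IsFrame (c u)) (Z : Finset V) :
    σ (frameMatrix A c Z).det = (frameMatrix A c Z).det := by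
  rw [RingHom.map_det, RingHom.mapMatrix_apply, frameMatrix_map_frob hA hc, frameMatrix_eq_diagonal_add,
    frameMatrix_eq_diagonal_add, ← det_transpose, transpose_add, transpose_mul, diagonal_transpose,
    diagonal_transpose, transpose_transpose, det_diagonal_add_diagonal_mul_comm]

lemma det_frameMatrix_eq_zero_or_eq_one {A : Matrix V V 𝔽₄}
    {c : V → (𝔽₄ × 𝔽₄) × (𝔽₄ × 𝔽₄)} (hA : InvSymm A) (hc : ∀ u, IsFrame (c u)) (Z : Finset V) :
    (frameMatrix A c Z).det = 0 ∨ (frameMatrix A c Z).det = 1 :=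
  eq_zero_or_eq_one_of_frob_eq (frob_det_frameMatrix hA hc Z)

open scoped Classical in
noncomputable def frameSystem (A : Matrix V V 𝔽₄) (c : V → (𝔽₄ × 𝔽₄) × (𝔽₄ × 𝔽₄)) :
    Finset (Finset V) :=
  Finset.univ.filter fun Z => (frameMatrix A c Z).det ≠ 0

lemma mem_frameSystem {A : Matrix V V 𝔽₄} {c : V → (𝔽₄ × 𝔽₄) × (𝔽₄ × 𝔽₄)} {Z : Finset V} :
    Z ∈ frameSystem A c ↔ (frameMatrix A c Z).det ≠ 0 := by
  simp [frameSystem]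

def HasFrameRep (E : Finset (Finset V)) : Prop :=
  ∃ (A : Matrix V V 𝔽₄) (c : V → (𝔽₄ × 𝔽₄) × (𝔽₄ × 𝔽₄)),
    InvSymm A ∧ (∀ u, IsFrame (c u)) ∧ frameSystem A c = E

def frameSwap {α : Type} [DecidableEq α] (c : α → (𝔽₄ × 𝔽₄) × (𝔽₄ × 𝔽₄)) (X : Finset α) :
    α → (𝔽₄ × 𝔽₄) × (𝔽₄ × 𝔽₄) :=
  fun u => if u ∈ X then (c u).swap else c u

lemma isFrame_frameSwap {α : Type} [DecidableEq α] {c : α → (𝔽₄ × 𝔽₄) × (𝔽₄ × 𝔽₄)}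
    (hc : ∀ u, IsFrame (c u)) (X : Finset α) (u : α) : IsFrame (frameSwap c X u) := by
  unfold frameSwap
  split_ifs
  exacts [(hc u).swap, hc u]

lemma frameChoice_frameSwap {α : Type} [DecidableEq α] (c : α → (𝔽₄ × 𝔽₄) × (𝔽₄ × 𝔽₄))
    (X Z : Finset α) : frameChoice (frameSwap c X) Z = frameChoice c (Z ∆ X) := by
  funext u
  by_cases hX : u ∈ X <;> by_cases hZ : u ∈ Z <;>
    simp [frameChoice, frameSwap, Finset.mem_symmDiff, hX, hZ]

lemma frameSystem_frameSwap (A : Matrix V V 𝔽₄) (c : V → (𝔽₄ × 𝔽₄) × (𝔽₄ × 𝔽₄))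
    (X : Finset V) : frameSystem A (frameSwap c X) = pivotOp (frameSystem A c) X := by
  ext Z
  rw [mem_pivotOp, mem_frameSystem, mem_frameSystem, frameMatrix, frameChoice_frameSwap]
  rfl

noncomputable def frameLoop {α : Type} [DecidableEq α] (c : α → (𝔽₄ × 𝔽₄) × (𝔽₄ × 𝔽₄))
    (u : α) : α → (𝔽₄ × 𝔽₄) × (𝔽₄ × 𝔽₄) :=
  Function.update c u ((c u).1, (c u).1 + (c u).2)

lemma isFrame_frameLoop {α : Type} [DecidableEq α] {c : α → (𝔽₄ × 𝔽₄) × (𝔽₄ × 𝔽₄)}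
    (hc : ∀ u, IsFrame (c u)) (u v : α) : IsFrame (frameLoop c u v) := by
  unfold frameLoop
  rcases eq_or_ne v u with rfl | hv
  · rw [Function.update_self]
    exact (hc v).loop
  · rw [Function.update_of_ne hv]
    exact hc v

lemma frameMatrix_frameLoop_of_notMem {α : Type} [DecidableEq α] (A : Matrix α α 𝔽₄)
    (c : α → (𝔽₄ × 𝔽₄) × (𝔽₄ × 𝔽₄)) {u : α} {Z : Finset α} (hu : u ∉ Z) :
    frameMatrix A (frameLoop c u) Z = frameMatrix A c Z := by
  ext i j
  by_cases hi : i = u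
  · subst hi
    simp [frameMatrix, frameChoice, frameLoop, hu]
  · simp [frameMatrix, frameChoice, frameLoop, hi]

/-- The row of `u` in the loop-complemented frame is the sum of its two former options. -/
lemma det_frameMatrix_frameLoop_of_mem (A : Matrix V V 𝔽₄) (c : V → (𝔽₄ × 𝔽₄) × (𝔽₄ × 𝔽₄))
    {u : V} {Z : Finset V} (hu : u ∈ Z) :
    (frameMatrix A (frameLoop c u) Z).det
      = (frameMatrix A c Z).det + (frameMatrix A c (Z.erase u)).det := by
  have hrow : ∀ i ≠ u, frameMatrix A c (Z.erase u) i = frameMatrix A c Z i := fun i hi =>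
    frameMatrix_row_eq A (by simp [frameChoice, hi])
  have hsplit : frameMatrix A (frameLoop c u) Z
      = (frameMatrix A c Z).updateRow u (frameMatrix A c Z u + frameMatrix A c (Z.erase u) u) := by
    ext i j
    by_cases hi : i = u
    · subst hi
      simp only [updateRow_self, frameMatrix, frameChoice, frameLoop, of_apply, hu,
        Finset.notMem_erase, Function.update_self, if_true, if_false, Pi.add_apply,
        Pi.smul_apply, Prod.fst_add, Prod.snd_add, smul_eq_mul]
      ring
    · simp [frameMatrix, frameChoice, frameLoop, hi]
  rw [hsplit, det_updateRow_add, updateRow_eq_self]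
  congr 2
  ext i : 1
  by_cases hi : i = u
  · subst hi
    rw [updateRow_self]
  · rw [updateRow_ne hi, hrow i hi]

lemma frameSystem_frameLoop {A : Matrix V V 𝔽₄} {c : V → (𝔽₄ × 𝔽₄) × (𝔽₄ × 𝔽₄)}
    (hA : InvSymm A) (hc : ∀ u, IsFrame (c u)) (u : V) :
    frameSystem A (frameLoop c u) = loopC (frameSystem A c) u := by
  ext Z
  rw [mem_loopC, mem_frameSystem, mem_frameSystem, mem_frameSystem]
  by_cases hu : u ∈ Z
  · rw [det_frameMatrix_frameLoop_of_mem A c hu]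
    rcases det_frameMatrix_eq_zero_or_eq_one hA hc Z with h₁ | h₁ <;>
      rcases det_frameMatrix_eq_zero_or_eq_one hA hc (Z.erase u) with h₂ | h₂ <;>
      simp [h₁, h₂, hu, Xor, CharTwo.add_self_eq_zero]
  · simp [frameMatrix_frameLoop_of_notMem A c hu, hu, Xor]

lemma HasFrameRep.pivotOp {E : Finset (Finset V)} (h : HasFrameRep E) (X : Finset V) :
    HasFrameRep (pivotOp E X) := by
  obtain ⟨A, c, hA, hc, rfl⟩ := h
  exact ⟨A, frameSwap c X, hA, isFrame_frameSwap hc X, frameSystem_frameSwap A c X⟩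

lemma HasFrameRep.loopC {E : Finset (Finset V)} (h : HasFrameRep E) (u : V) :
    HasFrameRep (loopC E u) := by
  obtain ⟨A, c, hA, hc, rfl⟩ := h
  exact ⟨A, frameLoop c u, hA, isFrame_frameLoop hc u, frameSystem_frameLoop hA hc u⟩

lemma frameMatrix_transpose_mul_comm {A : Matrix V V 𝔽₄} {c : V → (𝔽₄ × 𝔽₄) × (𝔽₄ × 𝔽₄)}
    (hc : ∀ u, IsFrame (c u)) :
    (frameMatrix A c ∅)ᵀ * frameMatrix Aᵀ c Finset.univ
      = (frameMatrix A c Finset.univ)ᵀ * frameMatrix Aᵀ c ∅ := by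
  simp only [frameMatrix_eq_diagonal_add, transpose_add, transpose_mul, diagonal_transpose,
    frameChoice, Finset.notMem_empty, Finset.mem_univ, if_true, if_false]
  refine diagonal_add_mul_diagonal_mul_comm _ _ _ _ (fun u => ?_) Aᵀ
  obtain ⟨-, -, -, -, h⟩ := hc u
  linear_combination h - (c u).1.2 * (c u).2.1 * (CharTwo.two_eq_zero : (2 : 𝔽₄) = 0)

noncomputable def frameNormal (A : Matrix V V 𝔽₄) (c : V → (𝔽₄ × 𝔽₄) × (𝔽₄ × 𝔽₄)) :
    Matrix V V 𝔽₄ :=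
  frameMatrix A c Finset.univ * (frameMatrix A c ∅)⁻¹

lemma det_frameMatrix_eq_det_pSub_frameNormal {A : Matrix V V 𝔽₄}
    {c : V → (𝔽₄ × 𝔽₄) × (𝔽₄ × 𝔽₄)} (h0 : (frameMatrix A c ∅).det ≠ 0) (Z : Finset V) :
    (frameMatrix A c Z).det = (pSub (frameNormal A c) Z).det * (frameMatrix A c ∅).det := by
  have hU : IsUnit (frameMatrix A c ∅).det := isUnit_iff_ne_zero.mpr h0
  rw [← nonsing_inv_mul_cancel_right (frameMatrix A c ∅) (frameMatrix A c Z) hU, det_mul,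
    det_eq_det_pSub_of_rows_single _ Z]
  · congr 2
    ext i j
    simp only [pSub, of_apply, frameNormal, mul_apply_eq_vecMul]
    rw [frameMatrix_row_eq A (show frameChoice c Z i = frameChoice c Finset.univ i by
      simp [frameChoice])]
  · intro i hi
    funext j
    rw [mul_apply_eq_vecMul, frameMatrix_row_eq A (show frameChoice c Z i = frameChoice c ∅ i by
      simp [frameChoice, hi]),
      ← mul_apply_eq_vecMul, mul_nonsing_inv _ hU, one_eq_pi_single]

lemma frameNormal_map_frob {A : Matrix V V 𝔽₄} {c : V → (𝔽₄ × 𝔽₄) × (𝔽₄ × 𝔽₄)}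
    (hA : InvSymm A) (hc : ∀ u, IsFrame (c u)) (h0 : (frameMatrix A c ∅).det ≠ 0) :
    (frameNormal A c).map σ = (frameNormal A c)ᵀ := by
  have hU : IsUnit (frameMatrix A c ∅) := (isUnit_iff_isUnit_det _).mpr (isUnit_iff_ne_zero.mpr h0)
  have hUσ : IsUnit (frameMatrix Aᵀ c ∅) := by
    rw [← frameMatrix_map_frob hA hc]
    exact hU.map (RingHom.mapMatrix σ)
  have hB : frameNormal A c * frameMatrix A c ∅ = frameMatrix A c Finset.univ :=
    nonsing_inv_mul_cancel_right _ _ ((isUnit_iff_isUnit_det _).mp hU)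
  have hBσ : (frameNormal A c).map σ * frameMatrix Aᵀ c ∅ = frameMatrix Aᵀ c Finset.univ := by
    rw [← frameMatrix_map_frob hA hc, ← frameMatrix_map_frob hA hc, ← Matrix.map_mul, hB]
  apply ((isUnit_transpose _).mpr hU).mul_left_cancel
  rw [← transpose_mul, hB]
  apply hUσ.mul_right_cancel
  rw [mul_assoc, hBσ, frameMatrix_transpose_mul_comm hc]

lemma exchange_of_empty_mem {A : Matrix V V 𝔽₄} {c : V → (𝔽₄ × 𝔽₄) × (𝔽₄ × 𝔽₄)}
    (hA : InvSymm A) (hc : ∀ u, IsFrame (c u)) (h0 : ∅ ∈ frameSystem A c) {Y : Finset V}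
    (hY : Y ∈ frameSystem A c) {u : V} (hu : u ∈ Y) :
    {u} ∈ frameSystem A c ∨ ∃ v ∈ Y, v ≠ u ∧ {u, v} ∈ frameSystem A c := by
  set B := frameNormal A c
  have h0' := mem_frameSystem.mp h0
  have hmem : ∀ D, D ∈ frameSystem A c ↔ (pSub B D).det ≠ 0 := fun D => by
    rw [mem_frameSystem, det_frameMatrix_eq_det_pSub_frameNormal h0', mul_ne_zero_iff,
      and_iff_left h0']
  have hherm : ∀ i j, σ (B i j) = B j i := fun i j =>
    congrFun (congrFun (frameNormal_map_frob hA hc h0') i) j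
  rw [hmem, det_pSub_singleton]
  by_cases huu : B u u = 0
  · obtain ⟨v, hv, huv⟩ : ∃ v ∈ Y, B u v ≠ 0 := by
      by_contra! hrow
      exact (hmem Y).mp hY (det_eq_zero_of_row_eq_zero ⟨u, hu⟩ fun j => hrow j j.2)
    have hvu : v ≠ u := by
      rintro rfl
      exact huv huu
    refine Or.inr ⟨v, hv, hvu, ?_⟩
    rw [hmem, det_pSub_pair B hvu.symm, huu, zero_mul, zero_sub, neg_ne_zero, ← hherm u v]
    exact mul_ne_zero huv (frob_eq_zero_iff.not.mpr huv)
  · exact Or.inl huu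

/-- Twisting by `X` moves `X` to `∅`, where `exchange_of_empty_mem` applies. -/
lemma HasFrameRep.isDeltaMatroid {E : Finset (Finset V)} (h : HasFrameRep E)
    (hne : E.Nonempty) : IsDeltaMatroid E := by
  obtain ⟨A, c, hA, hc, rfl⟩ := h
  refine ⟨hne, fun X hX Y hY u hu => ?_⟩
  have hmem : ∀ Z, Z ∈ frameSystem A (frameSwap c X) ↔ X ∆ Z ∈ frameSystem A c := fun Z => by
    rw [frameSystem_frameSwap, mem_pivotOp, symmDiff_comm]
  have h0 : ∅ ∈ frameSystem A (frameSwap c X) := by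
    rwa [hmem, ← Finset.bot_eq_empty, symmDiff_bot]
  have hY' : X ∆ Y ∈ frameSystem A (frameSwap c X) := by
    rwa [hmem, symmDiff_symmDiff_cancel_left]
  simpa only [hmem] using exchange_of_empty_mem hA (isFrame_frameSwap hc X) h0 hY' hu

/-! ### Column matroids -/

lemma colIndep_iff_linearIndepOn {ι W F : Type} [Fintype W] [Field F] {M : Matrix W ι F}
    {Y : Finset ι} : ColIndep M Y ↔ LinearIndepOn F M.col ↑Y :=
  Iff.rfl

lemma colIndep_iff_forall_sum {ι W F : Type} [Fintype W] [Field F] {M : Matrix W ι F}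
    {Y : Finset ι} :
    ColIndep M Y ↔ ∀ ξ : ι → F, (∀ w, ∑ y ∈ Y, ξ y * M w y = 0) → ∀ y ∈ Y, ξ y = 0 := by
  have hsum : ∀ ξ : ι → F, ∑ y ∈ Y, ξ y • M.col y = 0 ↔ ∀ w, ∑ y ∈ Y, ξ y * M w y = 0 :=
    fun ξ => by
      simp only [funext_iff, Finset.sum_apply, Pi.smul_apply, col_apply, smul_eq_mul,
        Pi.zero_apply]
  simp only [colIndep_iff_linearIndepOn, ← hsum]
  exact linearIndepOn_finset_iff

lemma colIndep_submatrix_iff {ι ι' F : Type} [Field F] {M : Matrix ι' ι F} {r : Finset ι'}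
    {Y : Finset ι} :
    ColIndep (M.submatrix ((↑) : r → ι') id) Y ↔
      ∀ ξ : ι → F, (∀ i ∈ r, ∑ y ∈ Y, ξ y * M i y = 0) → ∀ y ∈ Y, ξ y = 0 := by
  simp only [colIndep_iff_forall_sum, Subtype.forall, submatrix_apply, id]

lemma ColIndep.card_le {ι W F : Type} [Fintype W] [Field F] {M : Matrix W ι F} {Y : Finset ι}
    (hY : ColIndep M Y) : Y.card ≤ Fintype.card W := by
  simpa using hY.fintype_card_le_finrank

lemma ColIndep.eq_of_sum_smul_eq {ι W F : Type} [Fintype W] [Field F] {M : Matrix W ι F}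
    {T : Finset ι} (hT : ColIndep M T) {f g : ι → F}
    (h : ∑ t ∈ T, f t • M.col t = ∑ t ∈ T, g t • M.col t) : ∀ t ∈ T, f t = g t := by
  have hsub : ∑ t ∈ T, (f - g) t • M.col t = 0 := by
    simp only [Pi.sub_apply, sub_smul, Finset.sum_sub_distrib, h, sub_self]
  exact fun t ht => sub_eq_zero.mp (linearIndepOn_finset_iff.mp hT _ hsub t ht)

section StandardForm

variable {ι F : Type} [DecidableEq ι] [Field F] {D : Matrix ι ι F} {T : Finset ι}

lemma sum_mul_eq_of_unit_cols (hD : ∀ t ∈ T, ∀ t' ∈ T, D t t' = if t = t' then 1 else 0)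
    (Z : Finset ι) (ξ : ι → F) {t : ι} (ht : t ∈ T) :
    ∑ z ∈ Z, ξ z * D t z = (if t ∈ Z then ξ t else 0) + ∑ v ∈ Z \ T, ξ v * D t v := by
  rw [← Finset.sum_inter_add_sum_sdiff Z T]
  congr 1
  rw [Finset.sum_congr rfl fun z hz => by rw [hD t ht z (Finset.mem_inter.mp hz).2]]
  simp [mul_ite, Finset.sum_ite_eq, Finset.mem_inter, ht]

/-- Deleting the unit columns `Z ∩ T` together with their rows preserves independence. -/
lemma colIndep_submatrix_iff_sdiff (hD : ∀ t ∈ T, ∀ t' ∈ T, D t t' = if t = t' then 1 else 0)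
    (Z : Finset ι) :
    ColIndep (D.submatrix ((↑) : T → ι) id) Z ↔
      ColIndep (D.submatrix ((↑) : ↥(T \ Z) → ι) id) (Z \ T) := by
  simp only [colIndep_submatrix_iff, Finset.mem_sdiff, and_imp]
  constructor
  · intro h ξ hξ v hvZ hvT
    let ζ : ι → F := fun z => if z ∈ T then -∑ w ∈ Z \ T, ξ w * D z w else ξ z
    have hζ : ∀ t ∈ T, ∑ z ∈ Z, ζ z * D t z = 0 := by
      intro t ht
      have hsd : ∑ w ∈ Z \ T, ζ w * D t w = ∑ w ∈ Z \ T, ξ w * D t w :=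
        Finset.sum_congr rfl fun w hw => by simp [ζ, (Finset.mem_sdiff.mp hw).2]
      rw [sum_mul_eq_of_unit_cols hD Z ζ ht, hsd]
      by_cases htZ : t ∈ Z
      · simp [ζ, htZ, ht]
      · simp [htZ, hξ t ht htZ]
    simpa [ζ, hvT] using h ζ hζ v hvZ
  · intro h ξ hξ z hz
    have hZT : ∀ v ∈ Z, v ∉ T → ξ v = 0 := h ξ fun t ht htZ => by
      rw [← hξ t ht, sum_mul_eq_of_unit_cols hD Z ξ ht, if_neg htZ, zero_add]
    by_cases hzT : z ∈ T
    · have hsd : ∑ v ∈ Z \ T, ξ v * D z v = 0 := Finset.sum_eq_zero fun v hv => by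
        rw [hZT v (Finset.mem_sdiff.mp hv).1 (Finset.mem_sdiff.mp hv).2, zero_mul]
      have := hξ z hzT
      rwa [sum_mul_eq_of_unit_cols hD Z ξ hzT, if_pos hz, hsd, add_zero] at this
    · exact hZT z hz hzT

end StandardForm

section ColumnMatroid

variable {W F : Type} [Fintype W] [Field F] {A : Matrix W V F}

lemma mem_colBases_iff {Z : Finset V} :
    Z ∈ colBases A ↔ ColIndep A Z ∧ ∀ Z', Z ⊆ Z' → ColIndep A Z' → Z = Z' := by
  classical
  simp [colBases]

lemma exists_mem_colBases : ∃ T, T ∈ colBases A := by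
  classical
  obtain ⟨T, hT, hmax⟩ := Finset.exists_max_image (Finset.univ.filter (ColIndep A)) Finset.card
    ⟨∅, Finset.mem_filter.mpr ⟨Finset.mem_univ _, linearIndependent_empty_type⟩⟩
  refine ⟨T, mem_colBases_iff.mpr ⟨(Finset.mem_filter.mp hT).2, fun Z hTZ hZ => ?_⟩⟩
  exact Finset.eq_of_subset_of_card_le hTZ (hmax Z (by simpa using hZ))

lemma mem_span_of_mem_colBases {Z : Finset V} (hZ : Z ∈ colBases A) (v : V) :
    A.col v ∈ Submodule.span F (A.col '' Z) := by
  obtain ⟨hind, hmax⟩ := mem_colBases_iff.mp hZ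
  by_contra hv
  obtain ⟨hins, hvZ⟩ := (LinearIndepOn.notMem_span_iff hind).mp hv
  have hins : ColIndep A (insert v Z) := by
    rwa [colIndep_iff_linearIndepOn, Finset.coe_insert]
  exact hvZ (Finset.insert_eq_self.mp (hmax _ (Finset.subset_insert v Z) hins).symm)

lemma ColIndep.card_le_card {T Y : Finset V} (hY : ColIndep A Y) (hT : T ∈ colBases A) :
    Y.card ≤ T.card := by
  classical
  have hspan : ∀ y : Y, A.col y ∈ Submodule.span F ↑(T.image A.col) := fun y => by
    rw [Finset.coe_image]
    exact mem_span_of_mem_colBases hT y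
  calc Y.card = Fintype.card Y := (Fintype.card_coe Y).symm
    _ ≤ Fintype.card ↑(T.image A.col : Set (W → F)) :=
        linearIndependent_le_span_aux' _ hY _ (Set.range_subset_iff.mpr hspan)
    _ ≤ T.card := by simpa using Finset.card_image_le

lemma ColIndep.mem_colBases {T Z : Finset V} (hZ : ColIndep A Z) (hT : T ∈ colBases A)
    (hcard : T.card ≤ Z.card) : Z ∈ colBases A :=
  mem_colBases_iff.mpr ⟨hZ, fun _ hZZ' hZ' =>
    Finset.eq_of_subset_of_card_le hZZ' ((hZ'.card_le_card hT).trans hcard)⟩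

/-- Column `v` holds the coordinates of `A.col v` in the columns `T`; meaningful only when
`T ∈ colBases A`. -/
noncomputable def stdCoords (A : Matrix W V F) (T : Finset V) : Matrix V V F :=
  of fun t v => Classical.epsilon (fun c : V → F => ∑ t ∈ T, c t • A.col t = A.col v) t

lemma sum_stdCoords_smul {T : Finset V} (hT : T ∈ colBases A) (v : V) :
    ∑ t ∈ T, stdCoords A T t v • A.col t = A.col v :=
  Classical.epsilon_spec
    ((Submodule.mem_span_image_finset_iff_exists_fun' F).mp (mem_span_of_mem_colBases hT v))

lemma stdCoords_of_mem {T : Finset V} (hT : T ∈ colBases A) {t t' : V} (ht : t ∈ T)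
    (ht' : t' ∈ T) : stdCoords A T t t' = if t = t' then 1 else 0 := by
  refine (mem_colBases_iff.mp hT).1.eq_of_sum_smul_eq (f := fun s => stdCoords A T s t')
    (g := fun s => if s = t' then 1 else 0) ?_ t ht
  simp [sum_stdCoords_smul hT, ite_smul, ht']

lemma sum_smul_eq_sum_stdCoords {T : Finset V} (hT : T ∈ colBases A) (s : Finset V)
    (ξ : V → F) :
    ∑ v ∈ s, ξ v • A.col v = ∑ t ∈ T, (∑ v ∈ s, ξ v * stdCoords A T t v) • A.col t := by
  calc ∑ v ∈ s, ξ v • A.col v = ∑ v ∈ s, ξ v • ∑ t ∈ T, stdCoords A T t v • A.col t := by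
        simp only [sum_stdCoords_smul hT]
    _ = ∑ t ∈ T, (∑ v ∈ s, ξ v * stdCoords A T t v) • A.col t := by
        simp only [Finset.smul_sum, smul_smul, Finset.sum_smul]
        exact Finset.sum_comm

lemma colIndep_iff_colIndep_stdCoords {T Z : Finset V} (hT : T ∈ colBases A) :
    ColIndep A Z ↔ ColIndep ((stdCoords A T).submatrix ((↑) : T → V) id) Z := by
  have hTind := (mem_colBases_iff.mp hT).1
  rw [colIndep_submatrix_iff, colIndep_iff_linearIndepOn, linearIndepOn_finset_iff]
  refine forall_congr' fun ξ => imp_congr_left ?_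
  rw [sum_smul_eq_sum_stdCoords hT]
  constructor
  · intro h
    simpa using hTind.eq_of_sum_smul_eq (g := 0) (by simpa using h)
  · intro h
    exact Finset.sum_eq_zero fun t ht => by rw [h t ht, zero_smul]

lemma colIndep_stdCoords_transpose {T Z : Finset V} (hT : T ∈ colBases A)
    (hZ : Z ∈ colBases A) :
    ColIndep ((stdCoords A T)ᵀ.submatrix ((↑) : ↥(Z \ T) → V) id) (T \ Z) := by
  have hD : ∀ t ∈ T, ∀ t' ∈ T, stdCoords A T t t' = if t = t' then 1 else 0 :=
    fun t ht t' ht' => stdCoords_of_mem hT ht ht'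
  set D := stdCoords A T
  rw [colIndep_submatrix_iff]
  intro η hη t₀ ht₀
  obtain ⟨ht₀T, ht₀Z⟩ := Finset.mem_sdiff.mp ht₀
  obtain ⟨ξ, hξ⟩ := (Submodule.mem_span_image_finset_iff_exists_fun' F).mp
    (mem_span_of_mem_colBases hZ t₀)
  have hcoord : ∀ t ∈ T, ∑ z ∈ Z, ξ z * D t z = D t t₀ :=
    (mem_colBases_iff.mp hT).1.eq_of_sum_smul_eq (f := fun t => ∑ z ∈ Z, ξ z * D t z)
      (g := fun t => D t t₀) (by rw [← sum_smul_eq_sum_stdCoords hT, hξ, sum_stdCoords_smul hT])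
  calc η t₀ = ∑ t ∈ T \ Z, η t * D t t₀ := by
        rw [Finset.sum_eq_single_of_mem t₀ ht₀ fun t ht htt₀ => by
          rw [hD t (Finset.mem_sdiff.mp ht).1 t₀ ht₀T, if_neg htt₀, mul_zero],
          hD t₀ ht₀T t₀ ht₀T, if_pos rfl, mul_one]
    _ = ∑ t ∈ T \ Z, η t * ∑ z ∈ Z, ξ z * D t z :=
        Finset.sum_congr rfl fun t ht => by rw [hcoord t (Finset.mem_sdiff.mp ht).1]
    _ = ∑ z ∈ Z, ξ z * ∑ t ∈ T \ Z, η t * D t z := by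
        simp only [Finset.mul_sum]
        rw [Finset.sum_comm]
        exact Finset.sum_congr rfl fun z _ => Finset.sum_congr rfl fun t _ => by ring
    _ = 0 := Finset.sum_eq_zero fun z hz => by
        by_cases hzT : z ∈ T
        · refine mul_eq_zero_of_right _ (Finset.sum_eq_zero fun t ht => ?_)
          obtain ⟨htT, htZ⟩ := Finset.mem_sdiff.mp ht
          rw [hD t htT z hzT, if_neg (by rintro rfl; exact htZ hz), mul_zero]
        · exact mul_eq_zero_of_right _ (hη z (Finset.mem_sdiff.mpr ⟨hz, hzT⟩))

/-- The basis-exchange criterion: the block of `stdCoords A T` on rows `T \ Z` and columns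
`Z \ T` is square and invertible. -/
theorem mem_colBases_iff_colIndep_stdCoords {T Z : Finset V} (hT : T ∈ colBases A) :
    Z ∈ colBases A ↔
      ColIndep ((stdCoords A T).submatrix ((↑) : ↥(T \ Z) → V) id) (Z \ T) ∧
        ColIndep ((stdCoords A T)ᵀ.submatrix ((↑) : ↥(Z \ T) → V) id) (T \ Z) := by
  have hindep : ColIndep A Z ↔
      ColIndep ((stdCoords A T).submatrix ((↑) : ↥(T \ Z) → V) id) (Z \ T) :=
    (colIndep_iff_colIndep_stdCoords hT).trans
      (colIndep_submatrix_iff_sdiff (fun t ht t' ht' => stdCoords_of_mem hT ht ht') Z)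
  refine ⟨fun hZ => ⟨hindep.mp (mem_colBases_iff.mp hZ).1, colIndep_stdCoords_transpose hT hZ⟩,
    fun ⟨h₁, h₂⟩ => (hindep.mpr h₁).mem_colBases hT ?_⟩
  have c₁ := h₁.card_le
  have c₂ := h₂.card_le
  have e₁ := Finset.card_sdiff_add_card_inter Z T
  have e₂ := Finset.card_sdiff_add_card_inter T Z
  rw [Fintype.card_coe] at c₁ c₂
  rw [Finset.inter_comm] at e₂
  omega

end ColumnMatroid

/-! ### Quaternary matroids are frame-represented -/

/-- The standard representation `[[0, D], [D^σᵀ, 0]]` with respect to the split `T, Tᶜ`. -/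
noncomputable def stdRep {α : Type} [DecidableEq α] (D : Matrix α α 𝔽₄) (T : Finset α) :
    Matrix α α 𝔽₄ :=
  of fun u v => if u ∈ T then (if v ∈ T then 0 else D u v) else (if v ∈ T then σ (D v u) else 0)

lemma stdRep_invSymm {α : Type} [DecidableEq α] (D : Matrix α α 𝔽₄) (T : Finset α) :
    InvSymm (stdRep D T) := by
  intro u v
  rw [transpose_apply, CharTwo.neg_eq, ← frobenius_def]
  by_cases hu : u ∈ T <;> by_cases hv : v ∈ T <;> simp [stdRep, hu, hv, frob_frob]

noncomputable def stdFrame {α : Type} [DecidableEq α] (T : Finset α) (u : α) :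
    (𝔽₄ × 𝔽₄) × (𝔽₄ × 𝔽₄) :=
  if u ∈ T then ((0, 1), (1, 0)) else ((1, 0), (0, 1))

lemma isFrame_stdFrame {α : Type} [DecidableEq α] (T : Finset α) (u : α) :
    IsFrame (stdFrame T u) := by
  unfold stdFrame
  split_ifs <;> simp [IsFrame]

lemma frameMatrix_stdFrame_mulVec (M : Matrix V V 𝔽₄) (T Z : Finset V) (x : V → 𝔽₄) :
    frameMatrix M (stdFrame T) Z *ᵥ x = fun u => if u ∈ Z ∆ T then (M *ᵥ x) u else x u := by
  funext u
  change frameMatrix M (stdFrame T) Z u ⬝ᵥ x = _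
  rw [frameMatrix_row, add_dotProduct, smul_dotProduct, smul_dotProduct, single_dotProduct]
  by_cases hu : u ∈ T <;> by_cases hZ : u ∈ Z <;>
    simp [frameChoice, stdFrame, Finset.mem_symmDiff, hu, hZ, mulVec, smul_eq_mul]

lemma frameMatrix_stdFrame_mulVec_eq_zero_iff (M : Matrix V V 𝔽₄) (T Z : Finset V)
    (x : V → 𝔽₄) : frameMatrix M (stdFrame T) Z *ᵥ x = 0 ↔
      (∀ u ∉ Z ∆ T, x u = 0) ∧ ∀ u ∈ Z ∆ T, (M *ᵥ x) u = 0 := by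
  rw [frameMatrix_stdFrame_mulVec, funext_iff]
  refine ⟨fun h => ⟨fun u hu => ?_, fun u hu => ?_⟩, fun ⟨h₁, h₂⟩ u => ?_⟩
  · simpa [hu] using h u
  · simpa [hu] using h u
  · by_cases hu : u ∈ Z ∆ T
    · simpa [hu] using h₂ u hu
    · simpa [hu] using h₁ u hu

lemma stdRep_mulVec {D : Matrix V V 𝔽₄} {T Z : Finset V} {x : V → 𝔽₄}
    (hx : ∀ u ∉ Z ∆ T, x u = 0) (u : V) :
    (stdRep D T *ᵥ x) u = if u ∈ T then ∑ v ∈ Z \ T, D u v * x v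
      else ∑ t ∈ T \ Z, σ (D t u) * x t := by
  have hxout : ∀ v, v ∉ Z → v ∉ T → x v = 0 := fun v hvZ hvT =>
    hx v (by simp [Finset.mem_symmDiff, hvZ, hvT])
  have hxin : ∀ v, v ∈ Z → v ∈ T → x v = 0 := fun v hvZ hvT =>
    hx v (by simp [Finset.mem_symmDiff, hvZ, hvT])
  rw [mulVec, dotProduct]
  split_ifs with hu
  · rw [← Finset.sum_subset (Finset.subset_univ (Z \ T)) fun v _ hv => ?_]
    · exact Finset.sum_congr rfl fun v hv => by simp [stdRep, hu, (Finset.mem_sdiff.mp hv).2]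
    · by_cases hvT : v ∈ T
      · simp [stdRep, hu, hvT]
      · simp [hxout v (fun hvZ => hv (Finset.mem_sdiff.mpr ⟨hvZ, hvT⟩)) hvT]
  · rw [← Finset.sum_subset (Finset.subset_univ (T \ Z)) fun v _ hv => ?_]
    · exact Finset.sum_congr rfl fun v hv => by simp [stdRep, hu, (Finset.mem_sdiff.mp hv).1]
    · by_cases hvT : v ∈ T
      · simp [hxin v (by_contra fun hvZ => hv (Finset.mem_sdiff.mpr ⟨hvT, hvZ⟩)) hvT]
      · simp [stdRep, hu, hvT]

lemma eq_zero_of_det_frameMatrix_stdFrame_ne_zero {M : Matrix V V 𝔽₄} {T Z : Finset V}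
    (h : (frameMatrix M (stdFrame T) Z).det ≠ 0) {x : V → 𝔽₄} (h₁ : ∀ u ∉ Z ∆ T, x u = 0)
    (h₂ : ∀ u ∈ Z ∆ T, (M *ᵥ x) u = 0) : x = 0 :=
  eq_zero_of_mulVec_eq_zero h ((frameMatrix_stdFrame_mulVec_eq_zero_iff M T Z x).mpr ⟨h₁, h₂⟩)

lemma colIndep_of_det_frameMatrix_stdRep_ne_zero {D : Matrix V V 𝔽₄} {T Z : Finset V}
    (h : (frameMatrix (stdRep D T) (stdFrame T) Z).det ≠ 0) :
    ColIndep (D.submatrix ((↑) : ↥(T \ Z) → V) id) (Z \ T) := by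
  rw [colIndep_submatrix_iff]
  intro ξ hξ v hv
  have hx : ∀ u ∉ Z ∆ T, (Z \ T).piecewise ξ 0 u = 0 := fun u hu =>
    Finset.piecewise_eq_of_notMem _ _ _ fun h' =>
      hu (Finset.mem_symmDiff.mpr (Or.inl (Finset.mem_sdiff.mp h')))
  have := congrFun (eq_zero_of_det_frameMatrix_stdFrame_ne_zero h hx fun u hu => ?_) v
  · rwa [Finset.piecewise_eq_of_mem _ _ _ hv] at this
  rw [stdRep_mulVec hx]
  split_ifs with huT
  · have huZ : u ∉ Z := by simp_all [Finset.mem_symmDiff]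
    rw [← hξ u (Finset.mem_sdiff.mpr ⟨huT, huZ⟩)]
    exact Finset.sum_congr rfl fun w hw => by rw [Finset.piecewise_eq_of_mem _ _ _ hw, mul_comm]
  · exact Finset.sum_eq_zero fun t ht => by
      rw [Finset.piecewise_eq_of_notMem _ _ _ fun h' =>
        (Finset.mem_sdiff.mp h').2 (Finset.mem_sdiff.mp ht).1, Pi.zero_apply, mul_zero]

lemma colIndep_transpose_of_det_frameMatrix_stdRep_ne_zero {D : Matrix V V 𝔽₄}
    {T Z : Finset V} (h : (frameMatrix (stdRep D T) (stdFrame T) Z).det ≠ 0) :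
    ColIndep (Dᵀ.submatrix ((↑) : ↥(Z \ T) → V) id) (T \ Z) := by
  simp only [colIndep_submatrix_iff, transpose_apply]
  intro η hη t ht
  have hx : ∀ u ∉ Z ∆ T, (T \ Z).piecewise (fun t => σ (η t)) 0 u = 0 := fun u hu =>
    Finset.piecewise_eq_of_notMem _ _ _ fun h' =>
      hu (Finset.mem_symmDiff.mpr (Or.inr (Finset.mem_sdiff.mp h')))
  have := congrFun (eq_zero_of_det_frameMatrix_stdFrame_ne_zero h hx fun u hu => ?_) t
  · rwa [Finset.piecewise_eq_of_mem _ _ _ ht, Pi.zero_apply, frob_eq_zero_iff] at this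
  rw [stdRep_mulVec hx]
  split_ifs with huT
  · exact Finset.sum_eq_zero fun w hw => by
      rw [Finset.piecewise_eq_of_notMem _ _ _ fun h' =>
        (Finset.mem_sdiff.mp hw).2 (Finset.mem_sdiff.mp h').1, Pi.zero_apply, mul_zero]
  · have huZ : u ∈ Z := by simp_all [Finset.mem_symmDiff]
    rw [← map_zero σ, ← hη u (Finset.mem_sdiff.mpr ⟨huZ, huT⟩), map_sum]
    exact Finset.sum_congr rfl fun w hw => by
      rw [Finset.piecewise_eq_of_mem _ _ _ hw, map_mul, mul_comm]

lemma det_frameMatrix_stdRep_ne_zero {D : Matrix V V 𝔽₄} {T Z : Finset V}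
    (h₁ : ColIndep (D.submatrix ((↑) : ↥(T \ Z) → V) id) (Z \ T))
    (h₂ : ColIndep (Dᵀ.submatrix ((↑) : ↥(Z \ T) → V) id) (T \ Z)) :
    (frameMatrix (stdRep D T) (stdFrame T) Z).det ≠ 0 := by
  rw [colIndep_submatrix_iff] at h₁ h₂
  intro hdet
  obtain ⟨x, hx0, hx⟩ := exists_mulVec_eq_zero_iff.mpr hdet
  obtain ⟨hsupp, hrows⟩ := (frameMatrix_stdFrame_mulVec_eq_zero_iff _ T Z x).mp hx
  have hrow : ∀ u ∈ Z ∆ T, (if u ∈ T then ∑ v ∈ Z \ T, D u v * x v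
      else ∑ t ∈ T \ Z, σ (D t u) * x t) = 0 := fun u hu => by
    rw [← stdRep_mulVec hsupp, hrows u hu]
  have hZT : ∀ v ∈ Z \ T, x v = 0 := h₁ x fun t ht => by
    obtain ⟨htT, htZ⟩ := Finset.mem_sdiff.mp ht
    have := hrow t (Finset.mem_symmDiff.mpr (Or.inr ⟨htT, htZ⟩))
    rw [if_pos htT] at this
    simpa only [mul_comm] using this
  have hTZ : ∀ t ∈ T \ Z, σ (x t) = 0 := h₂ (fun t => σ (x t)) fun v hv => by
    obtain ⟨hvZ, hvT⟩ := Finset.mem_sdiff.mp hv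
    have := congrArg σ (hrow v (Finset.mem_symmDiff.mpr (Or.inl ⟨hvZ, hvT⟩)))
    rw [if_neg hvT, map_sum, map_zero] at this
    simpa only [transpose_apply, map_mul, frob_frob, mul_comm] using this
  refine hx0 (funext fun u => ?_)
  by_cases hu : u ∈ Z ∆ T
  · rcases Finset.mem_symmDiff.mp hu with hu | hu
    · exact hZT u (Finset.mem_sdiff.mpr hu)
    · exact frob_eq_zero_iff.mp (hTZ u (Finset.mem_sdiff.mpr hu))
  · exact hsupp u hu

theorem colBases_eq_frameSystem {W : Type} [Fintype W] {A : Matrix W V 𝔽₄} {T : Finset V}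
    (hT : T ∈ colBases A) : colBases A = frameSystem (stdRep (stdCoords A T) T) (stdFrame T) := by
  ext Z
  rw [mem_colBases_iff_colIndep_stdCoords hT, mem_frameSystem]
  exact ⟨fun h => det_frameMatrix_stdRep_ne_zero h.1 h.2, fun h =>
    ⟨colIndep_of_det_frameMatrix_stdRep_ne_zero h,
      colIndep_transpose_of_det_frameMatrix_stdRep_ne_zero h⟩⟩

lemma hasFrameRep_colBases {W : Type} [Fintype W] (A : Matrix W V 𝔽₄) :
    HasFrameRep (colBases A) := by
  obtain ⟨T, hT⟩ := exists_mem_colBases (A := A)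
  exact ⟨_, _, stdRep_invSymm _ T, isFrame_stdFrame T, (colBases_eq_frameSystem hT).symm⟩

/-- every quaternary matroid (the set system of bases of the
column matroid of a matrix over GF(4)) is vertex-flip-safe: applying any
sequence of pivots and loop complementations yields a delta-matroid. -/
theorem quaternary_matroid_vfSafe {W : Type} [Fintype W]
    (A : Matrix W V (GaloisField 2 2)) (φ : List (V ⊕ V)) :
    IsDeltaMatroid (applyFlips (colBases A) φ) := by
  obtain ⟨hrep, hne⟩ := applyFlips_induction (fun E => HasFrameRep E ∧ E.Nonempty)
    (fun E u h => ⟨h.1.pivotOp {u}, h.2.image _⟩)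
    (fun E u h => ⟨h.1.loopC u, loopC_nonempty h.2 u⟩)
    φ (colBases A) ⟨hasFrameRep_colBases A, exists_mem_colBases⟩
  exact hrep.isDeltaMatroid hne
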